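/- arXiv:1410.8585 — 3 statements merged into one kernel-verified Lean document; each statement's English description precedes it below -/
import Mathlib

section
/- For every positive integer n, the absolute value of the difference between the number of column-even Latin squares of size n and the number of column-odd Latin squares of size n equals the absolute value of the difference between the number of even Latin squares of size n and the number of odd Latin squares of size n. In particular, the number of even Latin squares of size n differs from the number of odd ones if and only if the number of column-even Latin squares differs from the number of column-odd ones. -/
open scoped Classical

namespace AlonTarsi

/-- `L` is a Latin square: each row and each column is a bijection of `Fin n`. -/
def IsLatin {n : ℕ} (L : Fin n → Fin n → Fin n) : Prop :=
  (∀ k, Function.Bijective fun i => L k i) ∧ (∀ i, Function.Bijective fun k => L k i)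

/-- The sign of a function `Fin n → Fin n`: the sign of the corresponding permutation
if it is bijective, and `1` otherwise. -/
noncomputable def signFun {n : ℕ} (f : Fin n → Fin n) : ℤ :=
  if h : Function.Bijective f then (Equiv.Perm.sign (Equiv.ofBijective f h) : ℤ) else 1

noncomputable def rowSign {n : ℕ} (L : Fin n → Fin n → Fin n) : ℤ :=
  ∏ k, signFun fun i => L k i

noncomputable def colSign {n : ℕ} (L : Fin n → Fin n → Fin n) : ℤ :=
  ∏ i, signFun fun k => L k i

noncomputable def sign {n : ℕ} (L : Fin n → Fin n → Fin n) : ℤ :=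
  rowSign L * colSign L

noncomputable def evenCard (n : ℕ) : ℕ :=
  (Finset.univ.filter fun L : Fin n → Fin n → Fin n => IsLatin L ∧ sign L = 1).card

noncomputable def oddCard (n : ℕ) : ℕ :=
  (Finset.univ.filter fun L : Fin n → Fin n → Fin n => IsLatin L ∧ sign L = -1).card

noncomputable def colEvenCard (n : ℕ) : ℕ :=
  (Finset.univ.filter fun L : Fin n → Fin n → Fin n => IsLatin L ∧ colSign L = 1).card

noncomputable def colOddCard (n : ℕ) : ℕ :=
  (Finset.univ.filter fun L : Fin n → Fin n → Fin n => IsLatin L ∧ colSign L = -1).card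

variable {n : ℕ} {L : Fin n → Fin n → Fin n}

noncomputable def adj (L : Fin n → Fin n → Fin n) : Fin n → Fin n → Fin n :=
  fun k i => if hb : Function.Bijective fun j => L k j then (Equiv.ofBijective _ hb).symm i else i

lemma adj_eq (h : IsLatin L) (k i) :
    adj L k i = (Equiv.ofBijective (fun j => L k j) (h.1 k)).symm i := dif_pos (h.1 k)

lemma adj_left (h : IsLatin L) (k x) : L k (adj L k x) = x := by
  rw [adj_eq h]
  exact (Equiv.ofBijective (fun j => L k j) (h.1 k)).apply_symm_apply x

lemma adj_apply_self (h : IsLatin L) (k i) : adj L k (L k i) = i :=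
  (h.1 k).injective (adj_left h k (L k i))

lemma adj_isLatin (h : IsLatin L) : IsLatin (adj L) := by
  constructor
  · intro k
    constructor
    · intro x y hxy
      have := congrArg (L k) hxy
      rwa [adj_left h k x, adj_left h k y] at this
    · intro i
      exact ⟨L k i, adj_apply_self h k i⟩
  · intro i
    rw [← Finite.injective_iff_bijective]
    intro k k' hkk'
    have h1 : L k (adj L k i) = i := adj_left h k i
    have h2 : L k' (adj L k' i) = i := adj_left h k' i
    simp only at hkk'
    rw [hkk'] at h1
    exact (h.2 (adj L k' i)).injective (h1.trans h2.symm)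

lemma adj_adj (h : IsLatin L) : adj (adj L) = L := by
  funext k i
  have hadj := adj_isLatin h
  apply (hadj.1 k).injective
  show adj L k (adj (adj L) k i) = adj L k (L k i)
  rw [adj_left hadj k i, adj_apply_self h k i]

lemma signFun_pm (f : Fin n → Fin n) : signFun f = 1 ∨ signFun f = -1 := by
  unfold signFun
  split
  · rcases Int.units_eq_one_or (Equiv.Perm.sign (Equiv.ofBijective f ‹_›)) with h | h <;>
      rw [h] <;> simp
  · left; rfl

lemma rowSign_pm (L : Fin n → Fin n → Fin n) : rowSign L = 1 ∨ rowSign L = -1 := by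
  rw [← mul_self_eq_one_iff, rowSign, ← Finset.prod_mul_distrib]
  apply Finset.prod_eq_one
  intro k _
  rcases signFun_pm (fun i => L k i) with h | h <;> rw [h] <;> norm_num

lemma colSign_pm (L : Fin n → Fin n → Fin n) : colSign L = 1 ∨ colSign L = -1 := by
  rw [← mul_self_eq_one_iff, colSign, ← Finset.prod_mul_distrib]
  apply Finset.prod_eq_one
  intro k _
  rcases signFun_pm (fun i => L i k) with h | h <;> rw [h] <;> norm_num

lemma sign_pm (L : Fin n → Fin n → Fin n) : sign L = 1 ∨ sign L = -1 := by
  rw [sign]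
  rcases rowSign_pm L with h | h <;> rcases colSign_pm L with h' | h' <;>
    rw [h, h'] <;> norm_num

lemma rowSign_adj (h : IsLatin L) : rowSign (adj L) = rowSign L := by
  unfold rowSign
  apply Finset.prod_congr rfl
  intro k _
  have hb := (adj_isLatin h).1 k
  unfold signFun
  rw [dif_pos hb, dif_pos (h.1 k)]
  have he : Equiv.ofBijective (fun i => adj L k i) hb
      = (Equiv.ofBijective (fun i => L k i) (h.1 k)).symm := by
    apply Equiv.ext
    intro i
    apply (h.1 k).injective
    show L k (adj L k i) = L k ((Equiv.ofBijective (fun i => L k i) (h.1 k)).symm i)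
    rw [adj_left h k i]
    exact ((Equiv.ofBijective (fun i => L k i) (h.1 k)).apply_symm_apply i).symm
  rw [he, Equiv.Perm.sign_symm]

lemma colSign_adj (h : IsLatin L) :
    colSign (adj L) =
      ((Equiv.Perm.sign (Equiv.prodComm (Fin n) (Fin n)) : ℤˣ) : ℤ) * rowSign L * colSign L := by
  have hadj := adj_isLatin h
  set R : Fin n → Equiv.Perm (Fin n) := fun k => Equiv.ofBijective (fun i => L k i) (h.1 k)
    with hR
  set C : Fin n → Equiv.Perm (Fin n) := fun i => Equiv.ofBijective (fun k => L k i) (h.2 i)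
    with hC
  set D : Fin n → Equiv.Perm (Fin n) := fun s => Equiv.ofBijective (fun k => adj L k s) (hadj.2 s)
    with hD
  set pc : Equiv.Perm (Fin n × Fin n) := Equiv.prodComm (Fin n) (Fin n) with hpc
  have key : Equiv.prodCongrLeft C =
      (Equiv.prodCongrRight R).trans ((Equiv.prodCongrLeft D).trans pc.symm) := by
    apply Equiv.ext
    rintro ⟨k, i⟩
    simp only [Equiv.trans_apply, Equiv.prodCongrRight_apply, Equiv.prodCongrLeft_apply,
      hpc, Equiv.prodComm_symm, Equiv.prodComm_apply, Prod.swap_prod_mk]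
    have h1 : (D (R k i)) k = i := adj_apply_self h k i
    have h2 : C i k = R k i := rfl
    rw [Prod.mk.injEq]
    exact ⟨h2, h1.symm⟩
  have keymul : Equiv.prodCongrLeft C =
      (pc.symm * Equiv.prodCongrLeft D) * Equiv.prodCongrRight R := key
  have hsign := congrArg Equiv.Perm.sign keymul
  rw [map_mul, map_mul, Equiv.Perm.sign_symm, Equiv.Perm.sign_prodCongrLeft,
    Equiv.Perm.sign_prodCongrLeft, Equiv.Perm.sign_prodCongrRight] at hsign
  -- hsign : ∏ sign (C i) = (sign pc * ∏ sign (D s)) * ∏ sign (R k)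
  have hDprod : (∏ s, Equiv.Perm.sign (D s)) =
      Equiv.Perm.sign pc * (∏ k, Equiv.Perm.sign (R k)) * (∏ i, Equiv.Perm.sign (C i)) := by
    obtain ⟨a, ha⟩ : ∃ a, (∏ k, Equiv.Perm.sign (R k)) = a := ⟨_, rfl⟩
    obtain ⟨b, hb⟩ : ∃ b, (∏ i, Equiv.Perm.sign (C i)) = b := ⟨_, rfl⟩
    obtain ⟨d, hd⟩ : ∃ d, (∏ s, Equiv.Perm.sign (D s)) = d := ⟨_, rfl⟩
    obtain ⟨e, hee⟩ : ∃ e, Equiv.Perm.sign pc = e := ⟨_, rfl⟩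
    rw [ha, hb, hd, hee] at hsign ⊢
    rcases Int.units_eq_one_or a with rfl | rfl <;>
      rcases Int.units_eq_one_or d with rfl | rfl <;>
      rcases Int.units_eq_one_or e with rfl | rfl <;>
      simp_all
  have hcol : colSign (adj L) = ((∏ s, Equiv.Perm.sign (D s) : ℤˣ) : ℤ) := by
    rw [colSign, Units.coe_prod]
    apply Finset.prod_congr rfl
    intro s _
    unfold signFun
    rw [dif_pos (hadj.2 s)]
  have hrow : rowSign L = ((∏ k, Equiv.Perm.sign (R k) : ℤˣ) : ℤ) := by
    rw [rowSign, Units.coe_prod]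
    apply Finset.prod_congr rfl
    intro k _
    unfold signFun
    rw [dif_pos (h.1 k)]
  have hcolL : colSign L = ((∏ i, Equiv.Perm.sign (C i) : ℤˣ) : ℤ) := by
    rw [colSign, Units.coe_prod]
    apply Finset.prod_congr rfl
    intro i _
    unfold signFun
    rw [dif_pos (h.2 i)]
  rw [hcol, hDprod, hrow, hcolL]
  push_cast
  ring

lemma sign_adj (h : IsLatin L) :
    sign (adj L) = ((Equiv.Perm.sign (Equiv.prodComm (Fin n) (Fin n)) : ℤˣ) : ℤ) * colSign L := by
  rw [sign, rowSign_adj h, colSign_adj h]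
  have h2 : rowSign L * rowSign L = 1 := by
    rcases rowSign_pm L with h' | h' <;> rw [h'] <;> norm_num
  calc rowSign L * (((Equiv.Perm.sign (Equiv.prodComm (Fin n) (Fin n)) : ℤˣ) : ℤ) * rowSign L * colSign L)
      = (rowSign L * rowSign L) * (((Equiv.Perm.sign (Equiv.prodComm (Fin n) (Fin n)) : ℤˣ) : ℤ) * colSign L) := by ring
    _ = _ := by rw [h2, one_mul]


lemma sum_sign_split {α : Type*} [Fintype α] (P : α → Prop) (g : α → ℤ)
    (hg : ∀ a, g a = 1 ∨ g a = -1) :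
    ∑ a ∈ Finset.univ.filter P, g a =
      ((Finset.univ.filter fun a => P a ∧ g a = 1).card : ℤ) -
      ((Finset.univ.filter fun a => P a ∧ g a = -1).card : ℤ) := by
  classical
  rw [← Finset.sum_filter_add_sum_filter_not (Finset.univ.filter P) (fun a => g a = 1) g,
    Finset.filter_filter, Finset.filter_filter]
  have e2 : (Finset.univ.filter fun a => P a ∧ ¬ g a = 1)
      = (Finset.univ.filter fun a => P a ∧ g a = -1) := by
    apply Finset.filter_congr
    intro a _
    rcases hg a with h | h <;> simp [h]
  rw [e2]
  have e1 : ∑ a ∈ Finset.univ.filter (fun a => P a ∧ g a = 1), g a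
      = ((Finset.univ.filter fun a => P a ∧ g a = 1).card : ℤ) := by
    rw [Finset.sum_congr rfl (fun a ha => (Finset.mem_filter.mp ha).2.2)]
    simp
  have e3 : ∑ a ∈ Finset.univ.filter (fun a => P a ∧ g a = -1), g a
      = -((Finset.univ.filter fun a => P a ∧ g a = -1).card : ℤ) := by
    rw [Finset.sum_congr rfl (fun a ha => (Finset.mem_filter.mp ha).2.2)]
    simp [mul_comm]
  rw [e1, e3]
  ring


/-- Huang-Rota: the difference between the numbers of column-even and column-odd Latin
squares of size n equals, up to sign, the difference between the numbers of even and
odd Latin squares of size n; in particular, the Alon-Tarsi conjecture holds for n iff the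
column-sign Latin square conjecture holds for n. -/
theorem column_sign_difference_eq_sign_difference (n : ℕ) (hn : 0 < n) :
    |(colEvenCard n : ℤ) - (colOddCard n : ℤ)| = |(evenCard n : ℤ) - (oddCard n : ℤ)| ∧
      (evenCard n ≠ oddCard n ↔ colEvenCard n ≠ colOddCard n) := by
  classical
  have hsum1 : ∑ L ∈ Finset.univ.filter (fun L : Fin n → Fin n → Fin n => IsLatin L), sign L
      = (evenCard n : ℤ) - (oddCard n : ℤ) := by
    rw [evenCard, oddCard]
    exact sum_sign_split _ _ sign_pm
  have hsum2 : ∑ L ∈ Finset.univ.filter (fun L : Fin n → Fin n → Fin n => IsLatin L), colSign L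
      = (colEvenCard n : ℤ) - (colOddCard n : ℤ) := by
    rw [colEvenCard, colOddCard]
    exact sum_sign_split _ _ colSign_pm
  have hmem : ∀ L ∈ Finset.univ.filter (fun L : Fin n → Fin n → Fin n => IsLatin L),
      adj L ∈ Finset.univ.filter (fun L : Fin n → Fin n → Fin n => IsLatin L) := by
    intro L hL
    rw [Finset.mem_filter] at hL ⊢
    exact ⟨Finset.mem_univ _, adj_isLatin hL.2⟩
  have hinv : ∀ L ∈ Finset.univ.filter (fun L : Fin n → Fin n → Fin n => IsLatin L),
      adj (adj L) = L := by
    intro L hL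
    exact adj_adj (Finset.mem_filter.mp hL).2
  have hmove : ∑ L ∈ Finset.univ.filter (fun L : Fin n → Fin n → Fin n => IsLatin L), sign L
      = ∑ L ∈ Finset.univ.filter (fun L : Fin n → Fin n → Fin n => IsLatin L), sign (adj L) :=
    (Finset.sum_nbij' adj adj hmem hmem hinv hinv (fun a _ => rfl)).symm
  have hkey : (evenCard n : ℤ) - (oddCard n : ℤ)
      = ((Equiv.Perm.sign (Equiv.prodComm (Fin n) (Fin n)) : ℤˣ) : ℤ)
        * ((colEvenCard n : ℤ) - (colOddCard n : ℤ)) := by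
    rw [← hsum1, ← hsum2, hmove, Finset.mul_sum]
    apply Finset.sum_congr rfl
    intro L hL
    exact sign_adj (Finset.mem_filter.mp hL).2
  have habs : |(colEvenCard n : ℤ) - (colOddCard n : ℤ)|
      = |(evenCard n : ℤ) - (oddCard n : ℤ)| := by
    rcases Int.units_eq_one_or (Equiv.Perm.sign (Equiv.prodComm (Fin n) (Fin n))) with h | h <;>
      rw [h] at hkey <;> rw [hkey] <;> simp [abs_neg, abs_sub_comm]
  refine ⟨habs, ?_⟩
  have h2 : ∀ a b : ℕ, (a = b) ↔ |(a:ℤ) - (b:ℤ)| = 0 := by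
    intro a b
    rw [abs_eq_zero, sub_eq_zero, Nat.cast_inj]
  exact not_congr (((h2 _ _).trans (by rw [← habs])).trans (h2 _ _).symm)

end AlonTarsi
end

section
/- Let n be a positive integer and consider the multivariate polynomial ring over ℤ (or ℂ) in variables X_{ij} indexed by pairs (i,j) ∈ Fin n × Fin n, and let det X = ∑_{σ ∈ Perm(Fin n)} sgn(σ) ∏_i X_{i,σ(i)} be the determinant of the generic n × n matrix. Then the coefficient of the multilinear monomial ∏_{(i,j) ∈ Fin n × Fin n} X_{ij} in the polynomial (det X)^n equals the number of Latin squares of size n whose row sign is +1 minus the number of Latin squares of size n whose row sign is −1. -/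
open scoped Classical

namespace AlonTarsi

noncomputable def rowEvenCard (n : ℕ) : ℕ :=
  (Finset.univ.filter fun L : Fin n → Fin n → Fin n => IsLatin L ∧ rowSign L = 1).card

noncomputable def rowOddCard (n : ℕ) : ℕ :=
  (Finset.univ.filter fun L : Fin n → Fin n → Fin n => IsLatin L ∧ rowSign L = -1).card

/-- The determinant of the generic n × n matrix of variables X_{ij}. -/
noncomputable def genericDet (n : ℕ) : MvPolynomial (Fin n × Fin n) ℤ :=
  Matrix.det (Matrix.of fun i j : Fin n => (MvPolynomial.X (i, j) : MvPolynomial (Fin n × Fin n) ℤ))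

open Finset MvPolynomial

lemma prod_X_eq {α σ : Type*} (s : Finset α) (g : α → σ) :
    ∏ p ∈ s, (X (g p) : MvPolynomial σ ℤ) = monomial (∑ p ∈ s, Finsupp.single (g p) 1) 1 := by
  induction s using Finset.cons_induction with
  | empty => simp
  | cons a s ha ih =>
    rw [Finset.prod_cons, Finset.sum_cons, ih, X, monomial_mul, mul_one]

lemma prod_monomial {α σ : Type*} (s : Finset α) (d : α → (σ →₀ ℕ)) (c : α → ℤ) :
    ∏ a ∈ s, (monomial (d a) (c a) : MvPolynomial σ ℤ)
      = monomial (∑ a ∈ s, d a) (∏ a ∈ s, c a) := by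
  induction s using Finset.cons_induction with
  | empty => simp
  | cons a s ha ih =>
    rw [Finset.prod_cons, Finset.sum_cons, Finset.prod_cons, ih, monomial_mul]

lemma filter_card_one {α : Type*} [Fintype α] (P : α → Prop) [DecidablePred P] :
    (Finset.univ.filter P).card = 1 ↔ ∃! a, P a := by
  rw [Finset.card_eq_one]
  constructor
  · rintro ⟨a, ha⟩
    have hmem : ∀ b, P b ↔ b = a := by
      intro b
      rw [← Finset.mem_singleton, ← ha, Finset.mem_filter]
      simp
    exact ⟨a, (hmem a).2 rfl, fun b hb => (hmem b).1 hb⟩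
  · rintro ⟨a, hPa, hu⟩
    refine ⟨a, ?_⟩
    ext b
    simp only [Finset.mem_filter, Finset.mem_univ, true_and, Finset.mem_singleton]
    exact ⟨fun h => hu b h, fun h => h ▸ hPa⟩

lemma cond_iff {n : ℕ} (f : Fin n → Equiv.Perm (Fin n)) :
    (∑ k, ∑ i, Finsupp.single ((f k) i, i) (1 : ℕ))
        = (∑ p : Fin n × Fin n, Finsupp.single p 1)
      ↔ ∀ i, Function.Bijective fun k => (f k) i := by
  have h1 : ∀ q : Fin n × Fin n,
      ((∑ p : Fin n × Fin n, Finsupp.single p (1 : ℕ)) : (Fin n × Fin n) →₀ ℕ) q = 1 := by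
    intro q
    rw [Finsupp.finset_sum_apply]
    simp [Finsupp.single_apply]
  have h2 : ∀ j i : Fin n,
      ((∑ k, ∑ i', Finsupp.single ((f k) i', i') (1 : ℕ)) : (Fin n × Fin n) →₀ ℕ) (j, i)
        = (Finset.univ.filter fun k => (f k) i = j).card := by
    intro j i
    rw [Finsupp.finset_sum_apply]
    have : ∀ k : Fin n,
        ((∑ i', Finsupp.single ((f k) i', i') (1 : ℕ)) : (Fin n × Fin n) →₀ ℕ) (j, i)
          = if (f k) i = j then 1 else 0 := by
      intro k
      rw [Finsupp.finset_sum_apply]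
      rw [Finset.sum_eq_single i]
      · simp [Finsupp.single_apply, Prod.ext_iff]
      · intro b _ hb
        simp [Finsupp.single_apply, Prod.ext_iff, hb]
      · simp
    rw [Finset.sum_congr rfl fun k _ => this k, Finset.card_filter]
  rw [Finsupp.ext_iff]
  constructor
  · intro h i
    rw [Function.bijective_iff_existsUnique]
    intro j
    have hc := h (j, i)
    rw [h2, h1] at hc
    exact (filter_card_one _).1 hc
  · intro h q
    obtain ⟨j, i⟩ := q
    rw [h2, h1]
    exact (filter_card_one _).2 ((Function.bijective_iff_existsUnique _).1 (h i) j)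

noncomputable def toPerm {n : ℕ} (L : Fin n → Fin n → Fin n) (k : Fin n) : Equiv.Perm (Fin n) :=
  if h : Function.Bijective fun i => L k i then Equiv.ofBijective _ h else 1

lemma toPerm_eq {n : ℕ} (L : Fin n → Fin n → Fin n) (k : Fin n)
    (h : Function.Bijective fun i => L k i) : toPerm L k = Equiv.ofBijective _ h :=
  dif_pos h

lemma signFun_dichotomy {n : ℕ} (f : Fin n → Fin n) : signFun f = 1 ∨ signFun f = -1 := by
  unfold signFun
  split
  · rcases Int.units_eq_one_or (Equiv.Perm.sign (Equiv.ofBijective f ‹_›)) with h | h <;>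
      simp [h]
  · left; rfl

lemma rowSign_dichotomy {n : ℕ} (L : Fin n → Fin n → Fin n) :
    rowSign L = 1 ∨ rowSign L = -1 := by
  unfold rowSign
  refine Finset.prod_induction _ (fun x => x = 1 ∨ x = -1) ?_ (Or.inl rfl) fun k _ =>
    signFun_dichotomy _
  rintro a b (rfl | rfl) (rfl | rfl) <;> simp

/-- The coefficient of the multilinear monomial ∏_{i,j} X_{ij} in (det X)^n equals the
number of Latin squares of size n with row sign +1 minus the number with row sign -1. -/
theorem coeff_det_pow_eq_rowSign_difference (n : ℕ) (hn : 0 < n) :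
    MvPolynomial.coeff (∑ p : Fin n × Fin n, Finsupp.single p 1) ((genericDet n) ^ n) =
      (rowEvenCard n : ℤ) - (rowOddCard n : ℤ) := by
  classical
  have hdet : genericDet n = ∑ σ : Equiv.Perm (Fin n),
      monomial (∑ i, Finsupp.single (σ i, i) 1) ((Equiv.Perm.sign σ : ℤ)) := by
    rw [genericDet, Matrix.det_apply]
    refine Finset.sum_congr rfl fun σ _ => ?_
    have : ∏ i, (Matrix.of fun i j : Fin n =>
        (MvPolynomial.X (i, j) : MvPolynomial (Fin n × Fin n) ℤ)) (σ i) i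
        = monomial (∑ i, Finsupp.single (σ i, i) 1) (1 : ℤ) := prod_X_eq _ _
    rw [this, Units.smul_def, MvPolynomial.smul_eq_C_mul, C_mul_monomial, mul_one]
  have hpow : (genericDet n) ^ n = ∑ f : Fin n → Equiv.Perm (Fin n),
      monomial (∑ k, ∑ i, Finsupp.single ((f k) i, i) 1)
        (∏ k, (Equiv.Perm.sign (f k) : ℤ)) := by
    rw [hdet, ← Fin.prod_const n, Finset.prod_univ_sum, Fintype.piFinset_univ]
    exact Finset.sum_congr rfl fun f _ => prod_monomial _ _ _
  rw [hpow, MvPolynomial.coeff_sum]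
  have hcoeff : ∀ f : Fin n → Equiv.Perm (Fin n),
      MvPolynomial.coeff (∑ p : Fin n × Fin n, Finsupp.single p 1)
          (monomial (∑ k, ∑ i, Finsupp.single ((f k) i, i) 1)
            (∏ k, (Equiv.Perm.sign (f k) : ℤ)))
        = if (∀ i, Function.Bijective fun k => (f k) i)
            then ∏ k, (Equiv.Perm.sign (f k) : ℤ) else 0 := by
    intro f
    rw [MvPolynomial.coeff_monomial]
    exact if_congr (cond_iff f) rfl rfl
  rw [Finset.sum_congr rfl fun f _ => hcoeff f, ← Finset.sum_filter]
  have key : ∑ f ∈ Finset.univ.filter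
        (fun f : Fin n → Equiv.Perm (Fin n) => ∀ i, Function.Bijective fun k => (f k) i),
        (∏ k, (Equiv.Perm.sign (f k) : ℤ))
      = ∑ L ∈ Finset.univ.filter (fun L : Fin n → Fin n → Fin n => IsLatin L), rowSign L := by
    refine Finset.sum_nbij' (fun f => fun k i => (f k) i) (fun L => toPerm L) ?_ ?_ ?_ ?_ ?_
    · intro f hf
      simp only [Finset.mem_filter, Finset.mem_univ, true_and] at hf ⊢
      exact ⟨fun k => (f k).bijective, hf⟩
    · intro L hL
      simp only [Finset.mem_filter, Finset.mem_univ, true_and] at hL ⊢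
      intro i
      have : (fun k => (toPerm L k) i) = fun k => L k i := by
        funext k
        rw [toPerm_eq L k (hL.1 k)]
        rfl
      rw [this]
      exact hL.2 i
    · intro f hf
      funext k
      have hb : Function.Bijective fun i => (f k) i := (f k).bijective
      simp only [toPerm, dif_pos hb]
      exact Equiv.ext fun x => rfl
    · intro L hL
      simp only [Finset.mem_filter, Finset.mem_univ, true_and] at hL
      funext k i
      show (toPerm L k) i = L k i
      rw [toPerm_eq L k (hL.1 k)]
      rfl
    · intro f hf
      rw [rowSign]
      refine Finset.prod_congr rfl fun k _ => ?_
      have hb : Function.Bijective fun i => (f k) i := (f k).bijective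
      rw [signFun, dif_pos hb]
      have he : Equiv.ofBijective (fun i => (f k) i) hb = f k := Equiv.ext fun x => rfl
      rw [he]
  rw [key]
  set A := Finset.univ.filter (fun L : Fin n → Fin n → Fin n => IsLatin L) with hA
  rw [← Finset.sum_filter_add_sum_filter_not A (fun L => rowSign L = 1)]
  have e1 : ∑ L ∈ A.filter (fun L => rowSign L = 1), rowSign L
      = ((A.filter (fun L => rowSign L = 1)).card : ℤ) := by
    rw [Finset.sum_congr rfl fun L hL => (Finset.mem_filter.1 hL).2, Finset.sum_const,
      nsmul_eq_mul, mul_one]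
  have e2 : A.filter (fun L => ¬ rowSign L = 1) = A.filter (fun L => rowSign L = -1) := by
    refine Finset.filter_congr fun L _ => ?_
    rcases rowSign_dichotomy L with h | h <;> simp [h]
  have e3 : ∑ L ∈ A.filter (fun L => rowSign L = -1), rowSign L
      = -((A.filter (fun L => rowSign L = -1)).card : ℤ) := by
    rw [Finset.sum_congr rfl fun L hL => (Finset.mem_filter.1 hL).2, Finset.sum_const,
      nsmul_eq_mul, mul_neg_one]
  rw [e1, e2, e3, hA, Finset.filter_filter, Finset.filter_filter]
  rw [rowEvenCard, rowOddCard]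
  ring
end AlonTarsi
end

section
/- Fix positive integers d and n with n even. For a family v : Fin d → Fin n → (Fin d → ℂ) of d blocks of n vectors in ℂ^d, define F(v) = ∑_{σ : Fin d → Perm(Fin n)} ∏_{k ∈ Fin n} det M_k(σ, v), where M_k(σ, v) is the d × d complex matrix whose i-th column is the vector v i (σ i k). Then F is invariant under permuting the blocks: for every permutation τ of Fin d, F(fun i j => v (τ i) j) = F(v). -/
namespace AlonTarsi

/-- For a family v of d blocks of n vectors in ℂ^d,
F(v) = ∑_{σ : Fin d → Perm(Fin n)} ∏_k det M_k(σ, v),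
where M_k(σ, v) is the d × d matrix whose i-th column is v i (σ i k). -/
noncomputable def F (d n : ℕ) (v : Fin d → Fin n → Fin d → ℂ) : ℂ :=
  ∑ σ : Fin d → Equiv.Perm (Fin n), ∏ k : Fin n,
    Matrix.det (Matrix.of fun a i : Fin d => v i (σ i k) a)

/-- For n even, F is invariant under permuting the d blocks. -/
theorem F_perm_blocks_invariant (d n : ℕ) (hd : 0 < d) (hn : 0 < n) (hev : Even n)
    (v : Fin d → Fin n → Fin d → ℂ) (τ : Equiv.Perm (Fin d)) :
    F d n (fun i j => v (τ i) j) = F d n v := by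
  unfold F
  refine Fintype.sum_equiv (Equiv.arrowCongr τ (Equiv.refl _)) _ _ ?_
  intro σ
  have key : ∀ k : Fin n,
      Matrix.det (Matrix.of fun a i : Fin d => v (τ i) (σ i k) a)
      = (Equiv.Perm.sign τ : ℂ) * Matrix.det (Matrix.of fun a i : Fin d =>
          v i ((Equiv.arrowCongr τ (Equiv.refl (Equiv.Perm (Fin n))) σ i) k) a) := by
    intro k
    have : (Matrix.of fun a i : Fin d => v (τ i) (σ i k) a)
        = (Matrix.of fun a i : Fin d =>
            v i ((Equiv.arrowCongr τ (Equiv.refl (Equiv.Perm (Fin n))) σ i) k) a).submatrix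
          id τ := by
      ext a i
      simp [Equiv.arrowCongr, Matrix.submatrix]
    rw [this, Matrix.det_permute']
  simp only [key, Finset.prod_mul_distrib, Finset.prod_const, Finset.card_univ,
    Fintype.card_fin]
  have hs : (Equiv.Perm.sign τ : ℂ) ^ n = 1 := by
    obtain ⟨m, rfl⟩ := hev
    have h2 : (Equiv.Perm.sign τ : ℂ) ^ 2 = 1 := by
      rcases Int.units_eq_one_or (Equiv.Perm.sign τ) with h | h <;> rw [h] <;> norm_num
    rw [← two_mul, pow_mul, h2, one_pow]
  rw [hs, one_mul]

end AlonTarsi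
end
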